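/- Let A ⊆ ℤ and n ∈ ℤ. If n ∈ S₋Mχ_A and n−1 ∈ S₊Mχ_A (i.e. n is a left boundary point of the concave set of Mχ_A), then Mχ_A(n) − Mχ_A(n−1) ≤ |2χ_A(n) − χ_A(n−1) − χ_A(n+1)|. -/
import Mathlib


open Classical

/-- Discrete noncentered average `A_{r,s}f(n) = (1/(r+s+1)) ∑_{j=-r}^{s} |f(n+j)|`. -/
noncomputable def avg (f : ℤ → ℝ) (r s : ℕ) (n : ℤ) : ℝ :=
  (1 / (r + s + 1 : ℝ)) * ∑ j ∈ Finset.Icc (-(r : ℤ)) (s : ℤ), |f (n + j)|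

/-- Discrete noncentered Hardy–Littlewood maximal function `Mf(n) = sup_{r,s∈ℕ} A_{r,s}f(n)`. -/
noncomputable def M (f : ℤ → ℝ) (n : ℤ) : ℝ :=
  ⨆ r : ℕ, ⨆ s : ℕ, avg f r s n

/-- Characteristic function of `A ⊆ ℤ`. -/
noncomputable def chi (A : Set ℤ) (n : ℤ) : ℝ := if n ∈ A then 1 else 0

/-- The set of convex points `S₊f`. -/
def Splus (f : ℤ → ℝ) : Set ℤ := {n : ℤ | 2 * f n ≤ f (n + 1) + f (n - 1)}

/-- The set of concave points `S₋f`. -/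
def Sminus (f : ℤ → ℝ) : Set ℤ := (Splus f)ᶜ

/-- The left boundary `∂ₗS₋f`. -/
def bdl (f : ℤ → ℝ) : Set ℤ := {n : ℤ | n ∈ Sminus f ∧ n - 1 ∈ Splus f}

/-- The right boundary `∂ᵣS₋f`. -/
def bdr (f : ℤ → ℝ) : Set ℤ := {n : ℤ | n ∈ Sminus f ∧ n + 1 ∈ Splus f}

lemma sum_shift (f : ℤ → ℝ) (m a b : ℤ) :
    ∑ j ∈ Finset.Icc a b, |f (m + j)| = ∑ j ∈ Finset.Icc (1+a) (1+b), |f ((m-1) + j)| := by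
  rw [← Finset.map_add_left_Icc, Finset.sum_map]
  refine Finset.sum_congr rfl fun j _ => ?_
  congr 1
  simp [addLeftEmbedding]
  ring

lemma avg_nonneg (f : ℤ → ℝ) (r s : ℕ) (n : ℤ) : 0 ≤ avg f r s n := by
  unfold avg
  apply mul_nonneg (by positivity)
  exact Finset.sum_nonneg fun j _ => abs_nonneg _

lemma avg_chi_le_one (A : Set ℤ) (r s : ℕ) (n : ℤ) : avg (chi A) r s n ≤ 1 := by
  unfold avg
  have hcard : (Finset.Icc (-(r : ℤ)) (s : ℤ)).card = r + s + 1 := by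
    rw [Int.card_Icc]
    omega
  have hsum : ∑ j ∈ Finset.Icc (-(r : ℤ)) (s : ℤ), |chi A (n + j)| ≤ (r + s + 1 : ℝ) := by
    calc ∑ j ∈ Finset.Icc (-(r : ℤ)) (s : ℤ), |chi A (n + j)|
        ≤ ∑ j ∈ Finset.Icc (-(r : ℤ)) (s : ℤ), 1 := by
          refine Finset.sum_le_sum fun j _ => ?_
          unfold chi
          split <;> simp
      _ = (r + s + 1 : ℝ) := by rw [Finset.sum_const, hcard]; push_cast; ring
  have h1 : (0:ℝ) < (r + s + 1 : ℝ) := by positivity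
  rw [div_mul_eq_mul_div, one_mul, div_le_one h1]
  exact hsum

lemma bdd_inner (A : Set ℤ) (r : ℕ) (n : ℤ) :
    BddAbove (Set.range fun s : ℕ => avg (chi A) r s n) :=
  ⟨1, by rintro x ⟨s, rfl⟩; exact avg_chi_le_one A r s n⟩

lemma bdd_outer (A : Set ℤ) (n : ℤ) :
    BddAbove (Set.range fun r : ℕ => ⨆ s : ℕ, avg (chi A) r s n) :=
  ⟨1, by rintro x ⟨r, rfl⟩; exact ciSup_le fun s => avg_chi_le_one A r s n⟩

lemma avg_le_M (A : Set ℤ) (r s : ℕ) (n : ℤ) : avg (chi A) r s n ≤ M (chi A) n := by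
  calc avg (chi A) r s n ≤ ⨆ s : ℕ, avg (chi A) r s n := le_ciSup (bdd_inner A r n) s
    _ ≤ M (chi A) n := le_ciSup (bdd_outer A n) r

lemma M_le_one (A : Set ℤ) (n : ℤ) : M (chi A) n ≤ 1 :=
  ciSup_le fun r => ciSup_le fun s => avg_chi_le_one A r s n

lemma M_le (A : Set ℤ) (n : ℤ) (c : ℝ) (h : ∀ r s : ℕ, avg (chi A) r s n ≤ c) :
    M (chi A) n ≤ c :=
  ciSup_le fun r => ciSup_le fun s => h r s

lemma avg_zero_zero (f : ℤ → ℝ) (n : ℤ) : avg f 0 0 n = |f n| := by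
  simp [avg]

lemma M_nonneg (A : Set ℤ) (n : ℤ) : 0 ≤ M (chi A) n :=
  le_trans (avg_nonneg (chi A) 0 0 n) (avg_le_M A 0 0 n)

lemma M_eq_one (A : Set ℤ) (n : ℤ) (h : n ∈ A) : M (chi A) n = 1 := by
  refine le_antisymm (M_le_one A n) ?_
  have := avg_le_M A 0 0 n
  rw [avg_zero_zero] at this
  simp [chi, h] at this
  exact this

lemma avg_shift (f : ℤ → ℝ) (r s : ℕ) (n : ℤ) :
    avg f (r+1) s n = avg f r (s+1) (n-1) := by
  unfold avg
  rw [sum_shift]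
  have h1 : (1 : ℤ) + -((r:ℕ)+1 : ℕ) = -(r:ℤ) := by push_cast; ring
  have h2 : (1 : ℤ) + (s : ℕ) = ((s+1 : ℕ) : ℤ) := by push_cast; ring
  rw [h1, h2]
  congr 1
  push_cast
  ring

lemma key (A : Set ℤ) (n : ℤ) (hn : n ∉ A) (hn1 : (n-1) ∉ A)
    (h1 : n ∈ Sminus (M (chi A))) : M (chi A) n ≤ M (chi A) (n-1) := by
  have hchin : chi A n = 0 := by simp [chi, hn]
  have hchin1 : chi A (n-1) = 0 := by simp [chi, hn1]
  have h1' : M (chi A) (n+1) + M (chi A) (n-1) < 2 * M (chi A) n := by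
    have h := h1
    simp only [Sminus, Splus, Set.mem_compl_iff, Set.mem_setOf_eq, not_le] at h
    exact h
  have hbound : ∀ r s : ℕ, avg (chi A) r s n ≤
      max (M (chi A) (n-1)) ((M (chi A) (n-1) + M (chi A) (n+1))/2) := by
    intro r s
    match r with
    | (r+1) =>
      refine le_trans ?_ (le_max_left _ _)
      rw [avg_shift]
      exact avg_le_M A r (s+1) (n-1)
    | 0 =>
      refine le_trans ?_ (le_max_right _ _)
      match s with
      | 0 =>
        rw [avg_zero_zero, hchin, abs_zero]
        have := M_nonneg A (n-1); have := M_nonneg A (n+1); linarith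
      | (s+1) =>
        set T : ℝ := ∑ j ∈ Finset.Icc (0 : ℤ) ((s:ℤ)+1), |chi A (n + j)| with hT
        have hTnn : 0 ≤ T := Finset.sum_nonneg fun j _ => abs_nonneg _
        have havg : avg (chi A) 0 (s+1) n = (1/((s:ℝ)+2)) * T := by
          unfold avg
          have e1 : (-(((0:ℕ)):ℤ)) = (0:ℤ) := by norm_num
          have e2 : (((s+1:ℕ)):ℤ) = (s:ℤ)+1 := by push_cast; ring
          rw [e1, e2, ← hT]
          congr 1
          push_cast; ring_nf
        -- shifted sum identities
        have hicc : Finset.Icc (0:ℤ) ((s:ℤ)+2) = insert 0 (Finset.Icc (1:ℤ) ((s:ℤ)+2)) := by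
          ext x; simp only [Finset.mem_Icc, Finset.mem_insert]; omega
        have hicc2 : Finset.Icc (0:ℤ) ((s:ℤ)+1) = insert 0 (Finset.Icc (1:ℤ) ((s:ℤ)+1)) := by
          ext x; simp only [Finset.mem_Icc, Finset.mem_insert]; omega
        have hsumL : ∑ j ∈ Finset.Icc (0 : ℤ) ((s:ℤ)+2), |chi A ((n-1) + j)| = T := by
          rw [hicc, Finset.sum_insert (by simp)]
          have := sum_shift (chi A) n 0 ((s:ℤ)+1)
          rw [show (1:ℤ)+0 = 1 by ring, show (1:ℤ)+((s:ℤ)+1) = (s:ℤ)+2 by ring] at this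
          rw [← this, ← hT]
          simp [hchin1]
        have hsumR : ∑ j ∈ Finset.Icc (0 : ℤ) ((s:ℤ)), |chi A ((n+1) + j)| = T := by
          have := sum_shift (chi A) (n+1) 0 ((s:ℤ))
          rw [show (1:ℤ)+0 = 1 by ring, show n+1-1 = n by ring,
            show (1:ℤ)+(s:ℤ) = (s:ℤ)+1 by ring] at this
          rw [this, hT, hicc2, Finset.sum_insert (by simp)]
          simp [hchin]
        have havgL : avg (chi A) 0 (s+2) (n-1) = (1/((s:ℝ)+3)) * T := by
          unfold avg
          have e1 : (-(((0:ℕ)):ℤ)) = (0:ℤ) := by norm_num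
          have e2 : (((s+2:ℕ)):ℤ) = (s:ℤ)+2 := by push_cast; ring
          rw [e1, e2, hsumL]
          congr 1
          push_cast; ring_nf
        have havgR : avg (chi A) 0 s (n+1) = (1/((s:ℝ)+1)) * T := by
          unfold avg
          have e1 : (-(((0:ℕ)):ℤ)) = (0:ℤ) := by norm_num
          rw [e1, hsumR]
          congr 1
          push_cast; ring_nf
        have hL : (1/((s:ℝ)+3)) * T ≤ M (chi A) (n-1) := by
          rw [← havgL]; exact avg_le_M A 0 (s+2) (n-1)
        have hR : (1/((s:ℝ)+1)) * T ≤ M (chi A) (n+1) := by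
          rw [← havgR]; exact avg_le_M A 0 s (n+1)
        have hconv : 2 * ((1/((s:ℝ)+2)) * T) ≤ (1/((s:ℝ)+3)) * T + (1/((s:ℝ)+1)) * T := by
          have h1p : (0:ℝ) < (s:ℝ)+1 := by positivity
          have h2p : (0:ℝ) < (s:ℝ)+2 := by positivity
          have h3p : (0:ℝ) < (s:ℝ)+3 := by positivity
          have hE : (1/((s:ℝ)+3)) * T + (1/((s:ℝ)+1)) * T - 2 * ((1/((s:ℝ)+2)) * T)
              = 2*T/(((s:ℝ)+1)*(((s:ℝ)+2)*((s:ℝ)+3))) := by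
            field_simp
            ring
          have hpos := div_nonneg (by linarith : (0:ℝ) ≤ 2*T)
            (le_of_lt (by positivity : (0:ℝ) < ((s:ℝ)+1)*(((s:ℝ)+2)*((s:ℝ)+3))))
          linarith
        rw [havg]
        linarith
  have := M_le A n _ hbound
  rcases le_max_iff.mp this with h | h
  · exact h
  · linarith

theorem left_boundary_bound (A : Set ℤ) (n : ℤ)
    (h1 : n ∈ Sminus (M (chi A))) (h2 : n - 1 ∈ Splus (M (chi A))) :
    M (chi A) n - M (chi A) (n - 1) ≤ |2 * chi A n - chi A (n - 1) - chi A (n + 1)| := by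
  have hub : M (chi A) n ≤ 1 := M_le_one A n
  have hlb : 0 ≤ M (chi A) (n-1) := M_nonneg A (n-1)
  by_cases hA : n ∈ A
  · by_cases hB : (n-1) ∈ A
    · by_cases hC : (n+1) ∈ A
      · have hM1 : M (chi A) (n-1) = 1 := M_eq_one A (n-1) hB
        simp only [chi, if_pos hA, if_pos hB, if_pos hC]
        norm_num
        linarith
      · simp only [chi, if_pos hA, if_pos hB, if_neg hC]
        norm_num
        linarith
    · by_cases hC : (n+1) ∈ A
      · simp only [chi, if_pos hA, if_neg hB, if_pos hC]
        norm_num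
        linarith
      · simp only [chi, if_pos hA, if_neg hB, if_neg hC]
        norm_num
        linarith
  · by_cases hB : (n-1) ∈ A
    · by_cases hC : (n+1) ∈ A
      · simp only [chi, if_neg hA, if_pos hB, if_pos hC]
        norm_num
        linarith
      · simp only [chi, if_neg hA, if_pos hB, if_neg hC]
        norm_num
        linarith
    · by_cases hC : (n+1) ∈ A
      · simp only [chi, if_neg hA, if_pos hC, if_neg hB]
        norm_num
        linarith
      · have hk := key A n hA hB h1
        simp only [chi, if_neg hA, if_neg hB, if_neg hC]
        norm_num
        linarith
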